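/- In the hand-over-hand locking list, the only events that change the abstract set AbS (nodes reachable from Head) are the write n1.next = n3 in HoHAdd (which adds node n3 to AbS) and the write n1.next = n2.next in HoHRemove (which removes node n2 from AbS); moreover the first adds exactly {n3} to AbS and the second removes exactly {n2} from AbS. -/

import Mathlib

/-- A global state of the hand-over-hand locking list. -/
structure HState (Node : Type) where
  val   : Node → ℤ
  nxt   : Node → Option Node
  lockd : Node → Bool
  head  : Node
  tail  : Node

variable {Node : Type} [DecidableEq Node]

/-- Pointwise function update. -/
def upd {α : Type} (f : Node → α) (n : Node) (a : α) : Node → α :=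
  fun m => if m = n then a else f m

/-- `HReach S n`: node `n` is reachable from `Head` via next pointers. -/
def HReach (S : HState Node) (n : Node) : Prop :=
  Relation.ReflTransGen (fun a b => S.nxt a = some b) S.head n

/-- The abstract set of the hand-over-hand locking list: the nodes reachable
from `Head` via next pointers. -/
def AbS (S : HState Node) : Set Node := {n | HReach S n}

/-- Labels of the atomic events of the hand-over-hand locking list. -/
inductive Lbl (Node : Type)
  | lock    (n : Node)
  | unlock  (n : Node)
  | newNode (n1 n2 n3 : Node)   -- creation of n3 and the write n3.next := n2
  | addLP   (n1 n2 n3 : Node)   -- the HoHAdd LP write n1.next := n3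
  | remLP   (n1 n2 : Node)      -- the HoHRemove LP write n1.next := n2.next

/-- The labelled atomic events of the hand-over-hand locking list.  `HoHAdd`
creates an initially unreachable fresh node `n3` (setting `n3.next := n2` does
not affect reachability since nothing points to `n3`), then links it by
`n1.next := n3`, where `n1` is reachable and locked with `n1.next = n2`;
`HoHRemove` sets `n1.next := n2.next` for reachable, locked, adjacent
`n1, n2`. -/
inductive HStep : Lbl Node → HState Node → HState Node → Prop
  | lock (S : HState Node) (n : Node) :
      HStep (Lbl.lock n) S { S with lockd := upd S.lockd n true }
  | unlock (S : HState Node) (n : Node) :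
      HStep (Lbl.unlock n) S { S with lockd := upd S.lockd n false }
  | newNode (S : HState Node) (n1 n2 n3 : Node) :
      S.lockd n1 = true → S.lockd n2 = true →
      S.nxt n1 = some n2 → HReach S n1 →
      ¬ HReach S n3 → (∀ m, S.nxt m ≠ some n3) →
      S.val n1 < S.val n3 → S.val n3 < S.val n2 →
      HStep (Lbl.newNode n1 n2 n3) S { S with nxt := upd S.nxt n3 (some n2) }
  | addLP (S : HState Node) (n1 n2 n3 : Node) :
      S.lockd n1 = true → S.lockd n2 = true →
      S.nxt n1 = some n2 → HReach S n1 →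
      ¬ HReach S n3 → (∀ m, S.nxt m ≠ some n3) →
      S.nxt n3 = some n2 →
      S.val n1 < S.val n3 → S.val n3 < S.val n2 →
      HStep (Lbl.addLP n1 n2 n3) S { S with nxt := upd S.nxt n1 (some n3) }
  | remLP (S : HState Node) (n1 n2 : Node) :
      S.lockd n1 = true → S.lockd n2 = true →
      S.nxt n1 = some n2 → HReach S n1 →
      HStep (Lbl.remLP n1 n2) S { S with nxt := upd S.nxt n1 (S.nxt n2) }

/-! Strict sortedness makes the pointer structure acyclic; being also deterministic, its nodes
reachable from `Head` form a chain in which every node has at most one reachable predecessor.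
Hence redirecting `n1` from `n2` to `n2.next` makes exactly `n2` unreachable, splicing the
fresh, unreachable `n3` in between `n1` and `n2` makes exactly `n3` reachable, and writes to
unreachable nodes (such as `n3.next := n2`) are invisible from `Head`. -/

theorem Relation.ReflTransGen.or_of_sup_edge {α : Type*} {r : α → α → Prop} {a b x y : α}
    (h : ReflTransGen (fun u v => r u v ∨ u = a ∧ v = b) x y) :
    ReflTransGen r x y ∨ ReflTransGen r b y := by
  induction h with
  | refl => exact Or.inl .refl
  | tail _ huv ih =>
    rcases huv with huv | ⟨-, rfl⟩
    · exact ih.imp (·.tail huv) (·.tail huv)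
    · exact Or.inr .refl

lemma upd_eq_update {α : Type} (f : Node → α) (n : Node) (a : α) :
    upd f n a = Function.update f n a := by
  funext m
  simp [upd, Function.update_apply]

section NextReach

variable {α : Type*} {f : α → Option α} {r a b c x y : α}

abbrev NextReach (f : α → Option α) : α → α → Prop :=
  Relation.ReflTransGen fun a b => f a = some b

def NextAcyclic (f : α → Option α) : Prop :=
  ∀ a b, f a = some b → ¬ NextReach f b a

lemma NextReach.total (hx : NextReach f r x) (hy : NextReach f r y) :
    NextReach f x y ∨ NextReach f y x :=
  hx.total_of_right_unique (fun _ _ _ hb hc => Option.some_injective _ (hb.symm.trans hc)) hy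

lemma NextReach.eq_or_of_next (hxy : NextReach f x y) (hx : f x = some b) :
    x = y ∨ NextReach f b y := by
  rcases hxy.cases_head with rfl | ⟨c, hxc, hcy⟩
  · exact Or.inl rfl
  · exact Or.inr (Option.some_injective _ (hx.symm.trans hxc) ▸ hcy)

lemma NextReach.le_of_forall_next_lt {β : Type*} [Preorder β] {v : α → β}
    (hv : ∀ a b, f a = some b → v a < v b) (h : NextReach f x y) : v x ≤ v y := by
  induction h with
  | refl => exact le_rfl
  | tail _ hbc ih => exact ih.trans (hv _ _ hbc).le

lemma nextAcyclic_of_forall_next_lt {β : Type*} [Preorder β] {v : α → β}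
    (hv : ∀ a b, f a = some b → v a < v b) : NextAcyclic f :=
  fun a b hab hba => (hv a b hab).not_ge (hba.le_of_forall_next_lt hv)

lemma NextAcyclic.eq_of_next_eq (hf : NextAcyclic f) (hx : NextReach f r x)
    (hy : NextReach f r y) (hxb : f x = some b) (hyb : f y = some b) : x = y := by
  rcases hx.total hy with h | h
  · exact (h.eq_or_of_next hxb).resolve_right (hf y b hyb)
  · exact ((h.eq_or_of_next hyb).resolve_right (hf x b hxb)).symm

variable [DecidableEq α]

lemma nextReach_update_iff_of_not_nextReach (hn : ¬ NextReach f r a) (v : Option α) :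
    NextReach (Function.update f a v) r x ↔ NextReach f r x := by
  constructor
  · intro hx
    induction hx with
    | refl => exact .refl
    | tail _ hbc ih =>
      rw [Function.update_of_ne (fun h : _ = a => hn (h ▸ ih))] at hbc
      exact ih.tail hbc
  · intro hx
    induction hx with
    | refl => exact .refl
    | @tail b _ hb hbc ih =>
      refine ih.tail ?_
      rwa [Function.update_of_ne (fun h : b = a => hn (h ▸ hb))]

lemma nextReach_update_splice_iff (ha : NextReach f r a) (hab : f a = some b)
    (hcb : f c = some b) (hc : ¬ NextReach f r c) :
    NextReach (Function.update f a (some c)) r x ↔ NextReach f r x ∨ x = c := by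
  have hca : c ≠ a := fun h => hc (h ▸ ha)
  constructor
  · intro hx
    have edges : (fun u w => Function.update f a (some c) u = some w) ≤
        (fun u w => f u = some w ∨ u = a ∧ w = c) := by
      intro u w huw
      by_cases hu : u = a
      · subst hu
        exact Or.inr ⟨rfl, by simpa using huw.symm⟩
      · exact Or.inl (by rwa [Function.update_of_ne hu] at huw)
    rcases (Relation.ReflTransGen.mono edges _ _ hx).or_of_sup_edge with h | h
    · exact Or.inl h
    · exact (NextReach.eq_or_of_next h hcb).symm.imp (fun hb => (ha.tail hab).trans hb) Eq.symm
  · have paths : (fun u w => f u = some w) ≤ NextReach (Function.update f a (some c)) := by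
      intro u w huw
      by_cases hu : u = a
      · subst hu
        obtain rfl : w = b := Option.some_injective _ (huw.symm.trans hab)
        refine .head (Function.update_self ..) (.single ?_)
        rwa [Function.update_of_ne hca]
      · exact .single (by rwa [Function.update_of_ne hu])
    rintro (hx | rfl)
    · exact Relation.reflTransGen_closed paths _ _ hx
    · exact (Relation.reflTransGen_closed paths _ _ ha).tail (Function.update_self ..)

lemma NextAcyclic.nextReach_update_self (hf : NextAcyclic f) (v : Option α)
    (hya : NextReach f y a) : NextReach (Function.update f a v) y a := by
  induction hya using Relation.ReflTransGen.head_induction_on with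
  | refl => exact .refl
  | @head y c hyc hca ih =>
    have hy : y ≠ a := by
      rintro rfl
      exact hf y c hyc hca
    exact .head (by rwa [Function.update_of_ne hy]) ih

lemma nextReach_update_bypass_of_ne (hf : NextAcyclic f) (ha : NextReach f r a)
    (hab : f a = some b) (hx : NextReach f r x) (hxb : x ≠ b) :
    NextReach (Function.update f a (f b)) r x := by
  have hra := hf.nextReach_update_self (f b) ha
  suffices ∀ y, NextReach f r y → y = b ∨ NextReach (Function.update f a (f b)) r y from
    (this x hx).resolve_left hxb
  intro y hy
  induction hy with
  | refl => exact Or.inr .refl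
  | @tail u w _ huw ih =>
    rcases ih with rfl | hu
    · exact Or.inr (hra.tail (by rw [Function.update_self, huw]))
    · by_cases hua : u = a
      · subst hua
        exact Or.inl (Option.some_injective _ (huw.symm.trans hab))
      · exact Or.inr (hu.tail (by rwa [Function.update_of_ne hua]))

lemma nextReach_update_bypass_imp (hf : NextAcyclic f) (ha : NextReach f r a)
    (hab : f a = some b) (hx : NextReach (Function.update f a (f b)) r x) :
    NextReach f r x ∧ x ≠ b := by
  have hb : f b ≠ some b := fun hbb => hf b b hbb .refl
  induction hx with
  | refl => exact ⟨.refl, fun hrb => hf a b hab (hrb ▸ ha)⟩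
  | @tail u w _ huw ih =>
    obtain ⟨hu, -⟩ := ih
    by_cases hua : u = a
    · subst hua
      rw [Function.update_self] at huw
      exact ⟨(hu.tail hab).tail huw, by rintro rfl; exact hb huw⟩
    · rw [Function.update_of_ne hua] at huw
      refine ⟨hu.tail huw, ?_⟩
      rintro rfl
      exact hua (hf.eq_of_next_eq hu ha huw hab)

lemma nextReach_update_bypass_iff (hf : NextAcyclic f) (ha : NextReach f r a)
    (hab : f a = some b) :
    NextReach (Function.update f a (f b)) r x ↔ NextReach f r x ∧ x ≠ b :=
  ⟨nextReach_update_bypass_imp hf ha hab,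
    fun hx => nextReach_update_bypass_of_ne hf ha hab hx.1 hx.2⟩

end NextReach

lemma mem_AbS_iff {β : Type} {S : HState β} {n : β} : n ∈ AbS S ↔ NextReach S.nxt S.head n :=
  Iff.rfl

/-- In the hand-over-hand locking list (whose state is
strictly sorted by key), the only events that change the abstract set `AbS`
are the `HoHAdd` LP write `n1.next := n3` and the `HoHRemove` LP write
`n1.next := n2.next`; moreover the former adds exactly `{n3}` to `AbS` and
the latter removes exactly `{n2}` from `AbS`, while every other event leaves
`AbS` unchanged. -/
theorem hoh_only_lp_events_change_abs
    (l : Lbl Node) (S S' : HState Node)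
    (hstep : HStep l S S')
    -- strict sortedness of the pre-state
    (hsort : ∀ a b, S.nxt a = some b → S.val a < S.val b) :
    (∀ n1 n2 n3, l = Lbl.addLP n1 n2 n3 → AbS S' = AbS S ∪ {n3}) ∧
    (∀ n1 n2, l = Lbl.remLP n1 n2 → AbS S' = AbS S \ {n2}) ∧
    ((∀ n1 n2 n3 : Node, l ≠ Lbl.addLP n1 n2 n3) →
     (∀ n1 n2 : Node, l ≠ Lbl.remLP n1 n2) → AbS S' = AbS S) := by
  cases hstep with
  | lock | unlock => exact ⟨nofun, nofun, fun _ _ => rfl⟩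
  | newNode S n1 n2 n3 _ _ _ _ hn3 =>
    refine ⟨nofun, nofun, fun _ _ => Set.ext fun x => ?_⟩
    simp only [mem_AbS_iff, upd_eq_update]
    exact nextReach_update_iff_of_not_nextReach hn3 _
  | addLP S n1 n2 n3 _ _ hn12 hn1 hn3 _ hn32 =>
    refine ⟨?_, nofun, fun h _ => absurd rfl (h n1 n2 n3)⟩
    rintro _ _ _ ⟨⟩
    ext x
    simp only [mem_AbS_iff, upd_eq_update, Set.mem_union, Set.mem_singleton_iff]
    exact nextReach_update_splice_iff hn1 hn12 hn32 hn3
  | remLP S n1 n2 _ _ hn12 hn1 =>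
    refine ⟨nofun, ?_, fun _ h => absurd rfl (h n1 n2)⟩
    rintro _ _ ⟨⟩
    ext x
    simp only [mem_AbS_iff, upd_eq_update, Set.mem_sdiff, Set.mem_singleton_iff]
    exact nextReach_update_bypass_iff (nextAcyclic_of_forall_next_lt hsort) hn1 hn12
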